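/- Under the Protocol 1 model: if N ≥ 2 and an attack (U_E, {U_F^{(r)}}) satisfies the no-error conditions (T'), (Z') and (X'), with E_i the associated unit vectors, then E_i depends only on the Hamming weight of i: for all bitstrings i, i' with wt i = wt i', one has E_i = E_{i'}. -/

import Mathlib

/-!
Protocol 1 model (randomization-based semi-quantum key distribution):
see Boyer, Gelles, Kenigsberg, Mor, "Semi-Quantum Key Distribution".
-/

namespace SQKD1

/-- Bitstrings of length `N`. -/
abbrev Bits (N : ℕ) := Fin N → Bool

/-- The space attacked by `U_E`: Eve's probe together with the `N` travelling
qubits. -/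
abbrev HE (N d : ℕ) := EuclideanSpace ℂ (Fin d × Bits N)

/-- The space attacked by `U_F^{(r)}`: Eve's probe together with the `r`
reflected qubits. -/
abbrev HF (d r : ℕ) := EuclideanSpace ℂ (Fin d × (Fin r → Bool))

/-- Hamming weight of a bitstring. -/
def wt {n : ℕ} (y : Fin n → Bool) : ℕ := (Finset.univ.filter fun k => y k = true).card

/-- The elementary tensor `v ⊗ δ_u` of a vector `v` of Eve's probe space with a
standard basis vector `δ_u`. -/
noncomputable def tprod {d : ℕ} {ι : Type*} [DecidableEq ι]
    (v : EuclideanSpace ℂ (Fin d)) (u : ι) : EuclideanSpace ℂ (Fin d × ι) :=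
  WithLp.toLp 2 (fun p : Fin d × ι => if p.2 = u then v p.1 else 0)

/-- Condition (T'): no error on TEST bits; `U_E (ε₀ ⊗ δ_i) = E_i ⊗ δ_i`. -/
def CondT {N d : ℕ} (hd : 0 < d) (UE : HE N d ≃ₗᵢ[ℂ] HE N d)
    (E : Bits N → EuclideanSpace ℂ (Fin d)) : Prop :=
  ∀ i : Bits N,
    UE (EuclideanSpace.single ((⟨0, hd⟩ : Fin d), i) 1) = tprod (E i) i

/-- Condition (Z'): no error on Z-CTRL bits;
`U_F^{(r)} (E_i ⊗ δ_{i∘s}) = F_{s,i} ⊗ δ_{i∘s}`. -/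
def CondZ {N d : ℕ} (UF : (r : ℕ) → r ≤ N → (HF d r ≃ₗᵢ[ℂ] HF d r))
    (E : Bits N → EuclideanSpace ℂ (Fin d))
    (F : (r : ℕ) → r ≤ N → (Fin r ↪ Fin N) → Bits N → EuclideanSpace ℂ (Fin d)) :
    Prop :=
  ∀ (r : ℕ) (hr : r ≤ N) (s : Fin r ↪ Fin N) (i : Bits N),
    UF r hr (tprod (E i) (fun p => i (s p))) = tprod (F r hr s i) (fun p => i (s p))

/-- Condition (X'): no error on X-CTRL bits.  For `k := s p`, `i k = false` and
`i'` equal to `i` with bit `k` flipped, the state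
`Φ = (1/√2)(F_{s,i} ⊗ δ_{i∘s} + F_{s,i'} ⊗ δ_{i'∘s})` has, at every index
`(a,t)`, the same coefficient as at `(a, t')`, where `t'` is `t` with bit `p`
flipped. -/
def CondX {N d : ℕ}
    (F : (r : ℕ) → r ≤ N → (Fin r ↪ Fin N) → Bits N → EuclideanSpace ℂ (Fin d)) :
    Prop :=
  ∀ (r : ℕ) (hr : r ≤ N) (s : Fin r ↪ Fin N) (p : Fin r) (i : Bits N),
    i (s p) = false →
      ∀ (a : Fin d) (t : Fin r → Bool),
        ((Real.sqrt 2 : ℂ)⁻¹ •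
            (tprod (F r hr s i) (fun q => i (s q)) +
              tprod (F r hr s (Function.update i (s p) true))
                (fun q => Function.update i (s p) true (s q)))) (a, t) =
        ((Real.sqrt 2 : ℂ)⁻¹ •
            (tprod (F r hr s i) (fun q => i (s q)) +
              tprod (F r hr s (Function.update i (s p) true))
                (fun q => Function.update i (s p) true (s q))))
          (a, Function.update t p (!(t p)))

/-!
For `r = N` and a bijective `s`, condition (X') says that flipping any bit of `i` leaves
`F_{s,i}` unchanged, so `F_{s,i}` does not depend on `i`; comparing (Z') at the all-ones string
shows it does not depend on `s` either. Hence (Z') for `s = σ` and the string `i`, and for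
`s = id` and the string `i ∘ σ`, give `U_F(E_i ⊗ δ_{i∘σ}) = U_F(E_{i∘σ} ⊗ δ_{i∘σ})`, so
`E_{i∘σ} = E_i` for every permutation `σ`; strings of equal weight differ by a permutation.
-/

open Function

lemma tprod_apply {d : ℕ} {ι : Type*} [DecidableEq ι] (v : EuclideanSpace ℂ (Fin d)) (u : ι)
    (a : Fin d) (t : ι) : tprod v u (a, t) = if t = u then v a else 0 :=
  rfl

lemma tprod_left_injective {d : ℕ} {ι : Type*} [DecidableEq ι] (u : ι) :
    Injective fun v : EuclideanSpace ℂ (Fin d) => tprod v u := fun v w h => by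
  ext a
  simpa [tprod_apply] using congrArg (fun x => x (a, u)) h

theorem eq_const_true_of_update_true_eq {ι α : Type*} [Fintype ι] [DecidableEq ι]
    {G : (ι → Bool) → α} (hG : ∀ i k, i k = false → G (update i k true) = G i)
    (i : ι → Bool) : G i = G fun _ => true := by
  suffices ∀ S : Finset ι, ∀ i, (∀ k ∉ S, i k = true) → G i = G fun _ => true from
    this Finset.univ i (by simp)
  intro S
  induction S using Finset.induction_on with
  | empty =>
    intro i hi
    congr
    funext k
    exact hi k (Finset.notMem_empty k)
  | insert k S _ ih =>
    intro i hi
    have hupdate : G (update i k true) = G i := by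
      cases hik : i k
      · exact hG i k hik
      · rw [update_eq_self_iff.mpr hik.symm]
    rw [← hupdate]
    refine ih _ fun k' hk' => ?_
    by_cases hk : k' = k
    · simp [hk]
    · rw [update_of_ne hk]
      exact hi k' (by simp [hk, hk'])

lemma exists_perm_comp_eq_of_wt_eq {n : ℕ} {i i' : Fin n → Bool} (h : wt i = wt i') :
    ∃ σ : Equiv.Perm (Fin n), i ∘ σ = i' := by
  obtain ⟨σ, hσ⟩ := Equiv.Perm.exists_map_finset_eq
    (Finset.univ.filter (i' · = true)) (Finset.univ.filter (i · = true)) h.symm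
  refine ⟨σ, funext fun k => Bool.eq_iff_iff.mpr ?_⟩
  simpa using (congrArg (σ k ∈ ·) hσ).symm

section Attack

variable {N d : ℕ} {UF : (r : ℕ) → r ≤ N → (HF d r ≃ₗᵢ[ℂ] HF d r)}
  {E : Bits N → EuclideanSpace ℂ (Fin d)}
  {F : (r : ℕ) → r ≤ N → (Fin r ↪ Fin N) → Bits N → EuclideanSpace ℂ (Fin d)}

theorem CondX.update_true_eq (hX : CondX F) {r : ℕ} (hr : r ≤ N) (s : Fin r ↪ Fin N)
    (p : Fin r) {i : Bits N} (hi : i (s p) = false) :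
    F r hr s (update i (s p) true) = F r hr s i := by
  ext a
  -- at `t = i ∘ s` the flipped index is `i' ∘ s`, so each side of (X') sees a single summand
  have key := hX r hr s p i hi a fun q => i (s q)
  set t : Fin r → Bool := fun q => i (s q)
  have hcomp : (fun q => update i (s p) true (s q)) = update t p true :=
    update_comp_eq_of_injective i s.injective p true
  have hne : update t p true ≠ t := fun h => by simpa [t, hi] using congrFun h p
  have hflip : update t p (!t p) = update t p true := by simp [t, hi]
  rw [hcomp, hflip] at key
  simp only [PiLp.smul_apply, PiLp.add_apply, tprod_apply, if_neg hne,
    if_neg hne.symm, add_zero, zero_add, smul_eq_mul] at key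
  exact (mul_left_cancel₀ (by simp) key).symm

theorem CondX.eq_const_of_surjective (hX : CondX F) (hr : N ≤ N) {s : Fin N ↪ Fin N}
    (hs : Surjective s) (i : Bits N) : F N hr s i = F N hr s fun _ => true :=
  eq_const_true_of_update_true_eq (fun i k hk => by
    obtain ⟨p, rfl⟩ := hs k
    exact hX.update_true_eq hr s p hk) i

theorem F_eq_of_surjective (hZ : CondZ UF E F) (hX : CondX F) {s s' : Fin N ↪ Fin N}
    (hs : Surjective s) (hs' : Surjective s') (i j : Bits N) :
    F N le_rfl s i = F N le_rfl s' j := by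
  rw [hX.eq_const_of_surjective le_rfl hs, hX.eq_const_of_surjective le_rfl hs']
  exact tprod_left_injective (fun _ => true)
    ((hZ N le_rfl s fun _ => true).symm.trans (hZ N le_rfl s' fun _ => true))

theorem E_comp_perm (hZ : CondZ UF E F) (hX : CondX F) (σ : Equiv.Perm (Fin N))
    (i : Bits N) : E (i ∘ σ) = E i := by
  have hid := hZ N le_rfl (Equiv.refl (Fin N)).toEmbedding (i ∘ σ)
  have hσ := hZ N le_rfl σ.toEmbedding i
  rw [F_eq_of_surjective (s' := σ.toEmbedding) hZ hX (Equiv.refl _).surjective σ.surjective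
    (i ∘ σ) i] at hid
  exact tprod_left_injective (i ∘ σ) ((UF N le_rfl).injective (hid.trans hσ.symm))

end Attack

theorem protocol1_E_depends_only_on_weight_general (N d : ℕ)
    (UF : (r : ℕ) → r ≤ N → (HF d r ≃ₗᵢ[ℂ] HF d r))
    (E : Bits N → EuclideanSpace ℂ (Fin d))
    (F : (r : ℕ) → r ≤ N → (Fin r ↪ Fin N) → Bits N → EuclideanSpace ℂ (Fin d))
    (hZ : CondZ UF E F) (hX : CondX F) :
    ∀ i i' : Bits N, wt i = wt i' → E i = E i' := by
  intro i i' h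
  obtain ⟨σ, rfl⟩ := exists_perm_comp_eq_of_wt_eq h
  exact (E_comp_perm hZ hX σ i).symm

/-- **Lemma 3 of the paper.** If `N ≥ 2` and the attack induces
no error on TEST and CTRL bits, then `E_i` depends only on the Hamming weight
of `i`. -/
theorem protocol1_E_depends_only_on_weight (N d : ℕ) (hN : 2 ≤ N) (hd : 0 < d)
    (UE : HE N d ≃ₗᵢ[ℂ] HE N d)
    (UF : (r : ℕ) → r ≤ N → (HF d r ≃ₗᵢ[ℂ] HF d r))
    (E : Bits N → EuclideanSpace ℂ (Fin d))
    (F : (r : ℕ) → r ≤ N → (Fin r ↪ Fin N) → Bits N → EuclideanSpace ℂ (Fin d))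
    (hT : CondT hd UE E) (hZ : CondZ UF E F) (hX : CondX F) :
    ∀ i i' : Bits N, wt i = wt i' → E i = E i' :=
  protocol1_E_depends_only_on_weight_general N d UF E F hZ hX

end SQKD1
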